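/- arXiv:2307.13675 — 7 statements merged into one kernel-verified Lean document; each statement's English description precedes it below -/
import Mathlib

section
/- Let R be a commutative Noetherian ring and M a nonzero finitely generated R-module whose set of associated primes is {q} for a single prime ideal q, with q a minimal prime of R. Then q^l · M = 0, where l is the Loewy length of the Artinian local ring R_q, i.e., the smallest n with (q R_q)^n = 0. -/
universe u

/-- If `M` is a nonzero finitely generated module over a commutative Noetherian ring `R`
with `Ass_R(M) = {q}` for a minimal prime `q` of `R`, then `q ^ l • M = 0`, where
`l = ℓℓ(R_q)` is the Loewy length of the Artinian local ring `R_q`, i.e. the least `n`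
with `(q R_q) ^ n = 0`. -/
theorem pow_loewy_smul_eq_bot (R : Type u) [CommRing R] [IsNoetherianRing R]
    (M : Type u) [AddCommGroup M] [Module R M] [Module.Finite R M] [Nontrivial M]
    (q : Ideal R) [q.IsPrime] (hq : q ∈ minimalPrimes R)
    (hass : associatedPrimes R M = {q}) :
    (q ^ sInf {n : ℕ |
        (q.map (algebraMap R (Localization.AtPrime q))) ^ n = ⊥}) • (⊤ : Submodule R M) = ⊥ := by
  set Rq := Localization.AtPrime q
  haveI : IsNoetherianRing Rq := IsLocalization.isNoetherianRing q.primeCompl _ ‹_›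
  -- the image of q is contained in the nilradical
  have hle : q.map (algebraMap R Rq) ≤ nilradical Rq := by
    rw [nilradical_eq_sInf]
    refine le_sInf fun P hP => ?_
    haveI : P.IsPrime := hP
    have hcomap : P.comap (algebraMap R Rq) ≤ q := by
      intro x hx
      by_contra hxq
      exact ‹P.IsPrime›.ne_top (P.eq_top_of_isUnit_mem hx
        (IsLocalization.map_units (M := q.primeCompl) Rq ⟨x, hxq⟩))
    have : q ≤ P.comap (algebraMap R Rq) :=
      hq.2 ⟨Ideal.comap_isPrime _ _, bot_le⟩ hcomap
    calc q.map (algebraMap R Rq) ≤ (P.comap (algebraMap R Rq)).map (algebraMap R Rq) :=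
          Ideal.map_mono this
      _ ≤ P := Ideal.map_comap_le
  -- nilpotence gives membership in the set
  obtain ⟨n, hn⟩ := IsNoetherianRing.isNilpotent_nilradical Rq
  have hmem : n ∈ {n : ℕ | (q.map (algebraMap R Rq)) ^ n = ⊥} := by
    have : (q.map (algebraMap R Rq)) ^ n ≤ nilradical Rq ^ n := Ideal.pow_right_mono hle n
    rw [hn] at this
    exact le_bot_iff.mp this
  have hl : (q.map (algebraMap R Rq)) ^ sInf {n : ℕ | (q.map (algebraMap R Rq)) ^ n = ⊥} = ⊥ :=
    Nat.sInf_mem ⟨n, hmem⟩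
  set l := sInf {n : ℕ | (q.map (algebraMap R Rq)) ^ n = ⊥}
  rw [eq_bot_iff, Submodule.smul_le]
  intro r hr m _
  -- algebraMap r = 0 in Rq
  have h0 : algebraMap R Rq r = 0 := by
    have : algebraMap R Rq r ∈ (q.map (algebraMap R Rq)) ^ l := by
      rw [← Ideal.map_pow]
      exact Ideal.mem_map_of_mem _ hr
    rw [hl] at this
    exact this
  obtain ⟨s, hs⟩ := (IsLocalization.map_eq_zero_iff q.primeCompl Rq r).mp h0
  -- s is regular on M
  by_contra hrm
  have hsz : (s : R) ∈ ⋃ p ∈ associatedPrimes R M, (p : Set R) := by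
    rw [biUnion_associatedPrimes_eq_zero_divisors]
    refine ⟨r • m, hrm, ?_⟩
    rw [smul_smul, hs, zero_smul]
  rw [hass] at hsz
  simp only [Set.mem_singleton_iff, Set.iUnion_iUnion_eq_left] at hsz
  exact s.2 hsz
end

section
/- Let R be a commutative Noetherian ring, x an R-regular element (a nonzerodivisor), and M a finitely generated R-module such that x is a nonzerodivisor on M and x·M ≠ M, there is for each n ≥ 0 an isomorphism of R/xR-modules between the n-th syzygy over R/xR of Ω¹_R(M)/xΩ¹_R(M) and Ω^{n+1}_R(M)/xΩ^{n+1}_R(M), where syzygies are taken with respect to chosen projective covers in a fixed projective resolution. -/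
universe u

variable (R : Type u) [CommRing R]

/-- `IsSyzygy R n K M` : `K` is an `n`-th syzygy of `M`, i.e. there is an exact sequence
`0 → K → Rᵃⁿ⁻¹ → ⋯ → Rᵃ⁰ → M → 0` with finitely generated free middle terms. -/
def IsSyzygy : ℕ → ModuleCat.{u} R → ModuleCat.{u} R → Prop
  | 0, K, M => Nonempty (K ≃ₗ[R] M)
  | n + 1, K, M => ∃ (k : ℕ) (f : (Fin k → R) →ₗ[R] M), Function.Surjective f ∧
      IsSyzygy n K (ModuleCat.of R (LinearMap.ker f))

/-!
Reduction modulo `x` is exact on `0 → ker f → Rᵏ → N → 0` whenever `x` is regular on `N`; since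
`x` is regular on `M` and on every submodule of a free module, `K/xK` is an `(n+1)`-st syzygy of
`M/xM` over `R/xR`. So is `T`, an `n`-th syzygy of the first syzygy `Ω/xΩ` of `M/xM`. Two
`(n+1)`-st syzygies of the same module are stably isomorphic by Schanuel's lemma, applied once per
step.
-/

open LinearMap

section StablyIso

variable (A : Type*) [Semiring A]

def StablyIso (M N : Type*) [AddCommMonoid M] [Module A M] [AddCommMonoid N] [Module A N] :
    Prop :=
  ∃ a b : ℕ, Nonempty ((M × (Fin a → A)) ≃ₗ[A] (N × (Fin b → A)))

noncomputable def LinearEquiv.finAddArrowEquivProdArrow (a b : ℕ) :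
    (Fin (a + b) → A) ≃ₗ[A] ((Fin a → A) × (Fin b → A)) :=
  (LinearEquiv.funCongrLeft A A finSumFinEquiv).trans (LinearEquiv.sumArrowLequivProdArrow _ _ A A)

noncomputable def LinearEquiv.prodFinAdd (L : Type*) [AddCommMonoid L] [Module A L] (a b : ℕ) :
    (L × (Fin (a + b) → A)) ≃ₗ[A] ((L × (Fin a → A)) × (Fin b → A)) :=
  (LinearEquiv.refl A L).prodCongr (LinearEquiv.finAddArrowEquivProdArrow A a b) ≪≫ₗ
    (LinearEquiv.prodAssoc A _ _ _).symm

variable {A} {M N P : Type*} [AddCommMonoid M] [Module A M] [AddCommMonoid N] [Module A N]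
  [AddCommMonoid P] [Module A P]

theorem StablyIso.of_linearEquiv (e : M ≃ₗ[A] N) : StablyIso A M N :=
  ⟨0, 0, ⟨e.prodCongr (LinearEquiv.refl A _)⟩⟩

theorem StablyIso.trans : StablyIso A M N → StablyIso A N P → StablyIso A M P
  | ⟨a, b, ⟨e⟩⟩, ⟨c, d, ⟨e'⟩⟩ => by
    have swap : ((N × (Fin b → A)) × (Fin c → A)) ≃ₗ[A] ((N × (Fin c → A)) × (Fin b → A)) :=
      LinearEquiv.prodAssoc A _ _ _ ≪≫ₗ
        (LinearEquiv.refl A N).prodCongr (LinearEquiv.prodComm A _ _) ≪≫ₗ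
          (LinearEquiv.prodAssoc A _ _ _).symm
    exact ⟨a + c, d + b, ⟨LinearEquiv.prodFinAdd A M a c ≪≫ₗ e.prodCongr (.refl A _) ≪≫ₗ
      swap ≪≫ₗ e'.prodCongr (.refl A _) ≪≫ₗ (LinearEquiv.prodFinAdd A P d b).symm⟩⟩

end StablyIso

section Schanuel

variable {A : Type*} [Ring A] {N P Q : Type*} [AddCommGroup N] [Module A N]
  [AddCommGroup P] [Module A P] [AddCommGroup Q] [Module A Q]

theorem mem_ker_coprod_neg {f : P →ₗ[A] N} {g : Q →ₗ[A] N} {z : P × Q} :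
    z ∈ ker (f.coprod (-g)) ↔ f z.1 = g z.2 := by
  simp [add_neg_eq_zero]

def kerCoprodNegEquiv (f : P →ₗ[A] N) (g : Q →ₗ[A] N) (s : Q →ₗ[A] P) (hs : f ∘ₗ s = g) :
    ker (f.coprod (-g)) ≃ₗ[A] (ker f × Q) where
  toFun z := (⟨z.1.1 - s z.1.2, by
    rw [mem_ker, map_sub, mem_ker_coprod_neg.1 z.2, ← comp_apply f s, hs, sub_self]⟩, z.1.2)
  invFun w := ⟨(w.1 + s w.2, w.2), by
    simp [← hs, mem_ker.1 w.1.2]⟩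
  map_add' z w := by ext <;> simp; abel
  map_smul' c z := by ext <;> simp [smul_sub]
  left_inv z := by ext <;> simp
  right_inv w := by ext <;> simp

def kerCoprodNegComm (f : P →ₗ[A] N) (g : Q →ₗ[A] N) :
    ker (f.coprod (-g)) ≃ₗ[A] ker (g.coprod (-f)) where
  toFun z := ⟨z.1.swap, mem_ker_coprod_neg.2 (mem_ker_coprod_neg.1 z.2).symm⟩
  invFun z := ⟨z.1.swap, mem_ker_coprod_neg.2 (mem_ker_coprod_neg.1 z.2).symm⟩
  map_add' _ _ := rfl
  map_smul' _ _ := rfl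
  left_inv _ := rfl
  right_inv _ := rfl

theorem schanuel [Module.Projective A P] [Module.Projective A Q] {f : P →ₗ[A] N}
    {g : Q →ₗ[A] N} (hf : Function.Surjective f) (hg : Function.Surjective g) :
    Nonempty ((ker f × Q) ≃ₗ[A] (ker g × P)) := by
  obtain ⟨s, hs⟩ := Module.projective_lifting_property f g hf
  obtain ⟨t, ht⟩ := Module.projective_lifting_property g f hg
  exact ⟨(kerCoprodNegEquiv f g s hs).symm ≪≫ₗ kerCoprodNegComm f g ≪≫ₗ
    kerCoprodNegEquiv g f t ht⟩

def kerProdMapIdEquiv (f : P →ₗ[A] N) (L : Type*) [AddCommGroup L] [Module A L] :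
    ker (f.prodMap (LinearMap.id : L →ₗ[A] L)) ≃ₗ[A] ker f where
  toFun z := ⟨z.1.1, (Prod.ext_iff.1 z.2).1⟩
  invFun w := ⟨(w.1, 0), by simp⟩
  map_add' _ _ := rfl
  map_smul' _ _ := rfl
  left_inv z := Subtype.ext (Prod.ext rfl (Prod.ext_iff.1 z.2).2.symm)
  right_inv _ := rfl

theorem StablyIso.ker_of_surjective {M M' : Type*} [AddCommGroup M] [Module A M] [AddCommGroup M']
    [Module A M'] {k k' : ℕ} {f : (Fin k → A) →ₗ[A] M} {f' : (Fin k' → A) →ₗ[A] M'}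
    (hf : Function.Surjective f) (hf' : Function.Surjective f') :
    StablyIso A M M' → StablyIso A (ker f) (ker f')
  | ⟨a, b, ⟨e⟩⟩ => by
    let F := e.toLinearMap ∘ₗ f.prodMap LinearMap.id
    let F' := f'.prodMap (LinearMap.id : (Fin b → A) →ₗ[A] _)
    obtain ⟨E⟩ := schanuel (f := F) (g := F')
      (e.surjective.comp (hf.prodMap Function.surjective_id)) (hf'.prodMap Function.surjective_id)
    have hF : ker F ≃ₗ[A] ker f := .ofEq _ _ (LinearEquiv.ker_comp _ _) ≪≫ₗ kerProdMapIdEquiv f _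
    exact ⟨k' + b, k + a, ⟨hF.symm.prodCongr (LinearEquiv.finAddArrowEquivProdArrow A k' b) ≪≫ₗ
      E ≪≫ₗ (kerProdMapIdEquiv f' _).prodCongr (LinearEquiv.finAddArrowEquivProdArrow A k a).symm⟩⟩

end Schanuel

section Syzygy

variable {A : Type u} [CommRing A]

theorem IsSyzygy.congr : ∀ {n : ℕ} {K K' M M' : ModuleCat.{u} A},
    (K ≃ₗ[A] K') → (M ≃ₗ[A] M') → IsSyzygy A n K M → IsSyzygy A n K' M'
  | 0, _, _, _, _, eK, eM, ⟨e⟩ => ⟨eK.symm ≪≫ₗ e ≪≫ₗ eM⟩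
  | n + 1, _, _, _, _, eK, eM, ⟨k, f, hf, h⟩ => by
    refine ⟨k, eM.toLinearMap ∘ₗ f, eM.surjective.comp hf, h.congr eK (.ofEq _ _ ?_)⟩
    rw [LinearEquiv.ker_comp]

theorem IsSyzygy.succ_of_exact {n : ℕ} {K : ModuleCat.{u} A} {N F M : Type u}
    [AddCommGroup N] [Module A N] [AddCommGroup F] [Module A F] [AddCommGroup M] [Module A M]
    [Module.Free A F] [Module.Finite A F] {i : N →ₗ[A] F} {g : F →ₗ[A] M}
    (hi : Function.Injective i) (hg : Function.Surjective g) (hig : Function.Exact i g)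
    (h : IsSyzygy A n K (.of A N)) : IsSyzygy A (n + 1) K (.of A M) := by
  obtain ⟨k, ⟨e⟩⟩ : ∃ k, Nonempty (F ≃ₗ[A] (Fin k → A)) :=
    ⟨_, ⟨((Module.Free.chooseBasis A F).reindex (Fintype.equivFin _)).equivFun⟩⟩
  have hig' := (LinearEquiv.conj_exact_iff_exact i g e).2 hig
  refine ⟨k, g ∘ₗ e.symm.toLinearMap, hg.comp e.symm.surjective, h.congr (.refl _ _) ?_⟩
  exact LinearEquiv.ofInjective (e.toLinearMap ∘ₗ i) (e.injective.comp hi) ≪≫ₗ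
    .ofEq _ _ hig'.linearMap_ker_eq.symm

theorem IsSyzygy.succ_of_isSyzygy_one {n : ℕ} {T Ω M : ModuleCat.{u} A}
    (hT : IsSyzygy A n T Ω) : IsSyzygy A 1 Ω M → IsSyzygy A (n + 1) T M
  | ⟨k, f, hf, ⟨e⟩⟩ => ⟨k, f, hf, hT.congr (.refl _ _) e⟩

theorem IsSyzygy.stablyIso : ∀ {n : ℕ} {K K' M M' : ModuleCat.{u} A},
    IsSyzygy A n K M → IsSyzygy A n K' M' → StablyIso A M M' → StablyIso A K K'
  | 0, _, _, _, _, ⟨e⟩, ⟨e'⟩, h =>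
    (StablyIso.of_linearEquiv e).trans (h.trans (.of_linearEquiv e'.symm))
  | _ + 1, _, _, _, _, ⟨_, _, hf, h⟩, ⟨_, _, hf', h'⟩, hM =>
    h.stablyIso h' (hM.ker_of_surjective hf hf')

end Syzygy

section QuotSMulTop

open Pointwise

variable {R} (x : R)

theorem QuotSMulTop.map_injective_of_exact {N F M : Type*} [AddCommGroup N] [Module R N]
    [AddCommGroup F] [Module R F] [AddCommGroup M] [Module R M] {i : N →ₗ[R] F} {g : F →ₗ[R] M}
    (hi : Function.Injective i) (hig : Function.Exact i g) (hM : IsSMulRegular M x) :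
    Function.Injective (QuotSMulTop.map x i) := by
  have h := QuotSMulTop.map_first_exact_on_four_term_exact_of_isSMulRegular_last
    ((exact_zero_iff_injective N i).2 hi) hig hM
  rwa [map_zero, exact_zero_iff_injective] at h

theorem IsSyzygy.quotSMulTop (hx : IsSMulRegular R x) : ∀ {n : ℕ} {K M : ModuleCat.{u} R},
    IsSyzygy R n K M → IsSMulRegular M x →
      IsSyzygy (R ⧸ Ideal.span {x}) n (.of _ (QuotSMulTop x K)) (.of _ (QuotSMulTop x M))
  | 0, _, _, ⟨e⟩, _ =>
    ⟨(QuotSMulTop.congr x e).extendScalarsOfSurjective Ideal.Quotient.mk_surjective⟩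
  | _ + 1, _, _, ⟨k, f, hf, h⟩, hM => by
    have hker : IsSMulRegular (ker f) x :=
      (Pi.isSMulRegular_iff.2 fun _ => hx).submodule _ _
    have : Module.Finite (R ⧸ Ideal.span {x}) (QuotSMulTop x (Fin k → R)) :=
      .of_restrictScalars_finite R _ _
    let reduce {X Y : Type u} [AddCommGroup X] [Module R X] [AddCommGroup Y] [Module R Y]
        (φ : X →ₗ[R] Y) : QuotSMulTop x X →ₗ[R ⧸ Ideal.span {x}] QuotSMulTop x Y :=
      (QuotSMulTop.map x φ).extendScalarsOfSurjective Ideal.Quotient.mk_surjective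
    exact (h.quotSMulTop hx hker).succ_of_exact (i := reduce (ker f).subtype) (g := reduce f)
      (QuotSMulTop.map_injective_of_exact x (ker f).injective_subtype f.exact_subtype_ker_map hM)
      (QuotSMulTop.map_surjective x hf) (QuotSMulTop.map_exact x f.exact_subtype_ker_map hf)

noncomputable def quotIdealSpanSMulTopEquiv (N : Type*) [AddCommGroup N] [Module R N] :
    (N ⧸ (Ideal.span {x} • ⊤ : Submodule R N)) ≃ₗ[R ⧸ Ideal.span {x}] QuotSMulTop x N :=
  (Submodule.quotEquivOfEq _ _ (Submodule.ideal_span_singleton_smul x ⊤)).extendScalarsOfSurjective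
    Ideal.Quotient.mk_surjective

end QuotSMulTop

theorem syzygy_quotient_regular_element
    (x : R) (hx : x ∈ nonZeroDivisors R)
    (M : ModuleCat.{u} R)
    (hreg : IsSMulRegular M x) (n : ℕ)
    (Ω K : ModuleCat.{u} R)
    (hΩ : IsSyzygy R 1 Ω M) (hK : IsSyzygy R (n + 1) K M)
    (T : ModuleCat.{u} (R ⧸ Ideal.span {x}))
    (hT : IsSyzygy (R ⧸ Ideal.span {x}) n T
      (ModuleCat.of (R ⧸ Ideal.span {x})
        (↥Ω ⧸ (Ideal.span {x} • (⊤ : Submodule R ↥Ω))))) :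
    ∃ a b : ℕ,
      Nonempty ((↥T × (Fin a → R ⧸ Ideal.span {x}))
        ≃ₗ[R ⧸ Ideal.span {x}]
          ((↥K ⧸ (Ideal.span {x} • (⊤ : Submodule R ↥K))) × (Fin b → R ⧸ Ideal.span {x}))) := by
  have hxR : IsSMulRegular R x := (isRegular_iff_mem_nonZeroDivisors.2 hx).left
  have hTM : IsSyzygy _ (n + 1) T (.of _ (QuotSMulTop x M)) :=
    (hT.congr (.refl _ _) (quotIdealSpanSMulTopEquiv x Ω)).succ_of_isSyzygy_one
      (hΩ.quotSMulTop x hxR hreg)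
  have hKM := hK.quotSMulTop x hxR hreg
  exact (hTM.stablyIso hKM (.of_linearEquiv (.refl _ _))).trans
    (.of_linearEquiv (quotIdealSpanSMulTopEquiv x K).symm)
end

section
/- Let R be a commutative Noetherian ring and M a finitely generated R-module with first syzygy Ω¹_R(M) (kernel of a surjection from a finitely generated free module F onto M). If a ∈ R annihilates Ext¹_R(M, Ω¹_R(M)), then there is a short exact sequence of R-modules 0 → (0 :_M a) → M ⊕ Ω¹_R(M) → Ω¹_R(M/aM) → 0, for a suitable choice of syzygy Ω¹_R(M/aM) of M/aM. -/
/-!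
Let `K = ker f`. Lifting a projective resolution `P → M` through `f` gives a `1`-cocycle
`P₁ → K` representing the class of `0 → K → Rᵏ → M → 0`. Since `a` kills `Ext¹(M, K)`,
`a` times this cocycle is a coboundary `d ≫ w`, and `a` times the lift `P₀ → Rᵏ`, corrected
by `w`, descends to `s : M → Rᵏ` with `f ∘ s = a`. Then `(m, x) ↦ s m + x` maps `M × K` onto
`f⁻¹(aM)`, the kernel of `Rᵏ → M/aM`, with kernel `{(m, -s m) | a • m = 0} ≅ (0 :_M a)`.
-/

universe u

open CategoryTheory

namespace CategoryTheory

lemma ShortComplex.smul_mem_range_f_of_mem_annihilator_homology {R : Type*} [Ring R]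
    (S : ShortComplex (ModuleCat R)) {a : R} (ha : a ∈ Module.annihilator R S.homology)
    {x : S.X₂} (hx : S.g.hom x = 0) : a • x ∈ LinearMap.range S.f.hom := by
  rw [S.moduleCatHomologyIso.toLinearEquiv.annihilator_eq] at ha
  have hclass := (map_smul S.moduleCatLeftHomologyData.π.hom a ⟨x, hx⟩).trans
    (Module.mem_annihilator.1 ha _)
  obtain ⟨w, hw⟩ := (Submodule.Quotient.mk_eq_zero _).1 hclass
  exact ⟨w, congrArg Subtype.val hw⟩

variable {R : Type*} [Ring R] {C : Type*} [Category C] [Abelian C] [Linear R C]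
  [EnoughProjectives C] {a : R}

lemma ProjectiveResolution.exists_d_comp_eq_smul_of_mem_annihilator_Ext {X Y : C}
    (P : ProjectiveResolution X)
    (ha : a ∈ Module.annihilator R (((Ext R C 1).obj (Opposite.op X)).obj Y))
    {h : P.complex.X 1 ⟶ Y} (hh : P.complex.d 2 1 ≫ h = 0) :
    ∃ w : P.complex.X 0 ⟶ Y, P.complex.d 1 0 ≫ w = a • h := by
  let K := P.complex.linearYonedaObj R Y
  have e : ((Ext R C 1).obj (Opposite.op X)).obj Y ≅ (K.sc' 0 1 2).homology :=
    P.isoExt 1 Y ≪≫ K.homologyIsoSc' 0 1 2 (by simp) (by simp)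
  rw [e.toLinearEquiv.annihilator_eq] at ha
  exact (K.sc' 0 1 2).smul_mem_range_f_of_mem_annihilator_homology ha (x := h) hh

lemma ShortComplex.ShortExact.exists_comp_g_eq_smul_id_of_mem_annihilator_Ext
    {S : ShortComplex C} (hS : S.ShortExact)
    (ha : a ∈ Module.annihilator R (((Ext R C 1).obj (Opposite.op S.X₃)).obj S.X₁)) :
    ∃ s : S.X₃ ⟶ S.X₂, s ≫ S.g = a • 𝟙 S.X₃ := by
  have := hS.mono_f
  have := hS.epi_g
  let P := ProjectiveResolution.of S.X₃
  let π₀ : P.complex.X 0 ⟶ S.X₃ := P.π.f 0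
  have : Epi π₀ := inferInstanceAs (Epi (P.π.f 0))
  have hdπ₀ : P.complex.d 1 0 ≫ π₀ = 0 := P.complex_d_comp_π_f_zero
  let h₀ : P.complex.X 0 ⟶ S.X₂ := Projective.factorThru π₀ S.g
  have hh₀ : h₀ ≫ S.g = π₀ := Projective.factorThru_comp _ _
  let h₁ : P.complex.X 1 ⟶ S.X₁ :=
    hS.exact.lift (P.complex.d 1 0 ≫ h₀) (by simp [hh₀, hdπ₀])
  have hh₁ : h₁ ≫ S.f = P.complex.d 1 0 ≫ h₀ := hS.exact.lift_f _ _
  have hcocycle : P.complex.d 2 1 ≫ h₁ = 0 := by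
    rw [← cancel_mono S.f]
    simp [hh₁]
  obtain ⟨w, hw⟩ := P.exists_d_comp_eq_smul_of_mem_annihilator_Ext ha hcocycle
  obtain ⟨s, hs⟩ : ∃ s : S.X₃ ⟶ S.X₂, π₀ ≫ s = a • h₀ - w ≫ S.f :=
    ⟨_, P.exact₀.g_desc _ (by simp [Preadditive.comp_sub, reassoc_of% hw, hh₁])⟩
  refine ⟨s, ?_⟩
  rw [← cancel_epi π₀]
  calc π₀ ≫ s ≫ S.g = (a • h₀ - w ≫ S.f) ≫ S.g := by rw [← hs, Category.assoc]
    _ = π₀ ≫ (a • 𝟙 S.X₃) := by simp [hh₀]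

end CategoryTheory

namespace LinearMap

variable {R : Type*} [CommRing R] {M F : Type*} [AddCommGroup M] [Module R M]
  [AddCommGroup F] [Module R F]

lemma mem_ker_mkQ_smul_top_comp_iff (f : F →ₗ[R] M) (a : R) (y : F) :
    y ∈ ker ((Ideal.span {a} • (⊤ : Submodule R M)).mkQ ∘ₗ f) ↔ ∃ m, a • m = f y := by
  simp [Submodule.ideal_span_singleton_smul, Submodule.mem_smul_pointwise_iff_exists]

lemma exists_shortExact_torsionBy_prod_ker (f : F →ₗ[R] M) {a : R}
    (s : M →ₗ[R] F) (hs : ∀ m, f (s m) = a • m) :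
    ∃ (ι : Submodule.torsionBy R M a →ₗ[R] M × ker f)
      (π : M × ker f →ₗ[R] ker ((Ideal.span {a} • (⊤ : Submodule R M)).mkQ ∘ₗ f)),
      Function.Injective ι ∧ Function.Surjective π ∧ range ι = ker π := by
  let ι : Submodule.torsionBy R M a →ₗ[R] M × ker f :=
    (Submodule.torsionBy R M a).subtype.prod (codRestrict _ (-(s ∘ₗ Submodule.subtype _))
      fun m => by simp [hs, (Submodule.mem_torsionBy_iff _ _).1 m.2])
  let π : M × ker f →ₗ[R] ker ((Ideal.span {a} • (⊤ : Submodule R M)).mkQ ∘ₗ f) :=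
    codRestrict _ (s ∘ₗ fst R M (ker f) + (ker f).subtype ∘ₗ snd R M (ker f))
      fun p => (mem_ker_mkQ_smul_top_comp_iff f a _).2 ⟨p.1, by simp [hs]⟩
  refine ⟨ι, π, fun x y h => Subtype.ext congr(($h).1), ?_, ?_⟩
  · rintro ⟨y, hy⟩
    obtain ⟨m, hm⟩ := (mem_ker_mkQ_smul_top_comp_iff f a y).1 hy
    exact ⟨(m, ⟨y - s m, by simp [hs, hm]⟩), Subtype.ext (by simp [π])⟩
  · ext p
    constructor
    · rintro ⟨m, rfl⟩
      exact Subtype.ext (by simp [ι, π, codRestrict])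
    · intro hp
      have hsp : s p.1 + p.2 = 0 := congrArg Subtype.val hp
      have hap : a • p.1 = 0 := by simpa [hs] using congrArg f hsp
      exact ⟨⟨p.1, (Submodule.mem_torsionBy_iff _ _).2 hap⟩,
        Prod.ext rfl (Subtype.ext (neg_eq_of_add_eq_zero_right hsp))⟩

end LinearMap

theorem ses_from_ext_annihilator_general (R : Type u) [CommRing R]
    (M : Type u) [AddCommGroup M] [Module R M]
    (k : ℕ) (f : (Fin k → R) →ₗ[R] M) (hf : Function.Surjective f) (a : R)
    (ha : ∀ y : ((Ext R (ModuleCat.{u} R) 1).obj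
        (Opposite.op (ModuleCat.of R M))).obj (ModuleCat.of R ↥(LinearMap.ker f)),
      a • y = 0) :
    ∃ (l : ℕ) (g : (Fin l → R) →ₗ[R] (M ⧸ (Ideal.span {a} • (⊤ : Submodule R M)))),
      Function.Surjective g ∧
      ∃ (ι : ↥(Submodule.torsionBy R M a) →ₗ[R] M × ↥(LinearMap.ker f))
        (π : (M × ↥(LinearMap.ker f)) →ₗ[R] ↥(LinearMap.ker g)),
        Function.Injective ι ∧ Function.Surjective π ∧
          LinearMap.range ι = LinearMap.ker π := by
  obtain ⟨s, hs⟩ := (LinearMap.shortExact_shortComplexKer hf)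
    |>.exists_comp_g_eq_smul_id_of_mem_annihilator_Ext (Module.mem_annihilator.2 ha)
  refine ⟨k, Submodule.mkQ _ ∘ₗ f, (Submodule.mkQ_surjective _).comp hf, ?_⟩
  exact LinearMap.exists_shortExact_torsionBy_prod_ker f s.hom
    fun m => by simpa using ConcreteCategory.congr_hom hs m

/-- If `a ∈ R` annihilates `Ext¹_R(M, Ω¹M)`, where `Ω¹M = ker f` for a surjection
`f : Rᵏ → M`, then there are a first syzygy `Ω¹(M/aM) = ker g` of `M/aM` and a short exact
sequence `0 → (0 :_M a) → M ⊕ Ω¹M → Ω¹(M/aM) → 0`. -/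
theorem ses_from_ext_annihilator (R : Type u) [CommRing R] [IsNoetherianRing R]
    (M : Type u) [AddCommGroup M] [Module R M] [Module.Finite R M]
    (k : ℕ) (f : (Fin k → R) →ₗ[R] M) (hf : Function.Surjective f) (a : R)
    (ha : ∀ y : ((Ext R (ModuleCat.{u} R) 1).obj
        (Opposite.op (ModuleCat.of R M))).obj (ModuleCat.of R ↥(LinearMap.ker f)),
      a • y = 0) :
    ∃ (l : ℕ) (g : (Fin l → R) →ₗ[R] (M ⧸ (Ideal.span {a} • (⊤ : Submodule R M)))),
      Function.Surjective g ∧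
      ∃ (ι : ↥(Submodule.torsionBy R M a) →ₗ[R] M × ↥(LinearMap.ker f))
        (π : (M × ↥(LinearMap.ker f)) →ₗ[R] ↥(LinearMap.ker g)),
        Function.Injective ι ∧ Function.Surjective π ∧
          LinearMap.range ι = LinearMap.ker π :=
  ses_from_ext_annihilator_general R M k f hf a ha
end

section
/- Let R be a commutative Noetherian ring, I an ideal of R, and M a finitely generated R/I-module. Then for a suitable choice of first syzygies there is a short exact sequence of R-modules 0 → E → Ω¹_R(M) → Ω¹_{R/I}(M) → 0 where E is a direct summand of a finite direct sum of copies of I. -/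
universe u

/-- For an ideal `I` of a commutative Noetherian ring `R` and a finitely generated
`R ⧸ I`-module `M`, there are first syzygies `Ω¹_R M = ker f` and `Ω¹_{R⧸I} M = ker g` and a
short exact sequence `0 → E → Ω¹_R M → Ω¹_{R⧸I} M → 0` of `R`-modules, where
`E ∈ add I` is a direct summand of a finite direct sum of copies of `I`. -/
theorem syzygy_over_quotient_ses (R : Type u) [CommRing R] [IsNoetherianRing R] (I : Ideal R)
    (M : Type u) [AddCommGroup M] [Module R M] [Module (R ⧸ I) M]
    [IsScalarTower R (R ⧸ I) M] [Module.Finite (R ⧸ I) M] :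
    ∃ (k : ℕ) (f : (Fin k → R) →ₗ[R] M), Function.Surjective f ∧
    ∃ (l : ℕ) (g : (Fin l → R ⧸ I) →ₗ[R ⧸ I] M), Function.Surjective g ∧
    ∃ π : ↥(LinearMap.ker f) →ₗ[R] ↥(LinearMap.ker g),
      Function.Surjective π ∧
      ∃ (m : ℕ) (s : ↥(LinearMap.ker π) →ₗ[R] (Fin m → ↥I))
        (r : (Fin m → ↥I) →ₗ[R] ↥(LinearMap.ker π)),
        r ∘ₗ s = LinearMap.id := by
  classical
  obtain ⟨l, g, hg⟩ := Module.Finite.exists_fin' (R ⧸ I) M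
  set q : (Fin l → R) →ₗ[R] (Fin l → R ⧸ I) :=
    LinearMap.pi fun i => (Algebra.linearMap R (R ⧸ I)).comp (LinearMap.proj i) with hq
  have hqsurj : Function.Surjective q := by
    intro y
    choose x hx using fun i => Ideal.Quotient.mk_surjective (y i)
    exact ⟨x, funext fun i => hx i⟩
  set f : (Fin l → R) →ₗ[R] M := (g.restrictScalars R).comp q with hf
  have hfsurj : Function.Surjective f := hg.comp hqsurj
  refine ⟨l, f, hfsurj, l, g, hg, ?_⟩
  have hmem : ∀ x : ↥(LinearMap.ker f), q x.1 ∈ LinearMap.ker g := fun x => x.2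
  set π : ↥(LinearMap.ker f) →ₗ[R] ↥(LinearMap.ker g) :=
    { toFun := fun x => ⟨q x.1, hmem x⟩
      map_add' := fun x y => Subtype.ext (map_add q x.1 y.1)
      map_smul' := fun r x => Subtype.ext (by simp) } with hπ
  have hπsurj : Function.Surjective π := by
    rintro ⟨y, hy⟩
    obtain ⟨x, hx⟩ := hqsurj y
    refine ⟨⟨x, ?_⟩, Subtype.ext hx⟩
    show g (q x) = 0
    rw [hx]; exact hy
  refine ⟨π, hπsurj, ?_⟩
  have hmemI : ∀ x : ↥(LinearMap.ker π), ∀ i, x.1.1 i ∈ I := by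
    intro x i
    have h : q x.1.1 = 0 := congrArg Subtype.val x.2
    have h2 : Ideal.Quotient.mk I (x.1.1 i) = 0 := congrFun h i
    exact (Ideal.Quotient.eq_zero_iff_mem).mp h2
  set s : ↥(LinearMap.ker π) →ₗ[R] (Fin l → ↥I) :=
    { toFun := fun x => fun i => ⟨x.1.1 i, hmemI x i⟩
      map_add' := fun x y => rfl
      map_smul' := fun c x => rfl } with hs
  have hmemf : ∀ v : Fin l → ↥I, (fun i => (v i : R)) ∈ LinearMap.ker f := by
    intro v
    show g (q fun i => (v i : R)) = 0
    have : (q fun i => (v i : R)) = 0 := by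
      funext i
      exact Ideal.Quotient.eq_zero_iff_mem.mpr (v i).2
    rw [this, map_zero]
  have hmemπ : ∀ v : Fin l → ↥I, (⟨fun i => (v i : R), hmemf v⟩ : ↥(LinearMap.ker f)) ∈
      LinearMap.ker π := by
    intro v
    refine Subtype.ext ?_
    show (q fun i => (v i : R)) = 0
    funext i
    exact Ideal.Quotient.eq_zero_iff_mem.mpr (v i).2
  set r : (Fin l → ↥I) →ₗ[R] ↥(LinearMap.ker π) :=
    { toFun := fun v => ⟨⟨fun i => (v i : R), hmemf v⟩, hmemπ v⟩
      map_add' := fun v w => rfl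
      map_smul' := fun c v => rfl } with hr
  refine ⟨l, s, r, ?_⟩
  ext x
  rfl
end

section
/- Let R be a commutative Noetherian ring and G a finitely generated R-module, with |G|_n defined via extensions as follows: |G|_1 = add(G), and M ∈ |G|_n iff there is a short exact sequence 0 → Y → M ⊕ W → X → 0 with one of X, Y in |G|_{n−1} and the other in |G|_1. Then for all a, b ≥ 1, if E fits into a short exact sequence 0 → X → E ⊕ E' → Y → 0 with X ∈ |G|_a and Y ∈ |G|_b, then E ∈ |G|_{a+b}. -/
universe u

variable (R : Type u) [CommRing R]

/-- `M` is a direct summand of `N`. -/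
def DirectSummand (M N : ModuleCat.{u} R) : Prop :=
  ∃ (s : M →ₗ[R] N) (r : N →ₗ[R] M), r ∘ₗ s = LinearMap.id

/-- `M ∈ add G` : `M` is a direct summand of a finite direct sum of copies of `G`. -/
def InAdd (G M : ModuleCat.{u} R) : Prop :=
  ∃ k : ℕ, DirectSummand R M (ModuleCat.of R (Fin k → G))

/-- `ExtClos R G n M` means `M ∈ |G|ₙ`: `|G|₀` consists of zero modules, `|G|₁ = add G`,
and for `n ≥ 2`, `M ∈ |G|ₙ` iff there is a short exact sequence `0 → Y → M ⊕ W → X → 0`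
with one of `X, Y` in `|G|ₙ₋₁` and the other in `|G|₁`. -/
def ExtClos (G : ModuleCat.{u} R) : ℕ → ModuleCat.{u} R → Prop
  | 0, M => Subsingleton M
  | 1, M => InAdd R G M
  | n + 2, M => ∃ (W X Y : ModuleCat.{u} R) (i : Y →ₗ[R] M × W)
      (p : (M × W : Type u) →ₗ[R] X),
      Function.Injective i ∧ Function.Surjective p ∧
      LinearMap.range i = LinearMap.ker p ∧
      ((ExtClos G (n + 1) Y ∧ InAdd R G X) ∨ (InAdd R G Y ∧ ExtClos G (n + 1) X))

lemma extClos_one_iff (G M : ModuleCat.{u} R) : ExtClos R G 1 M ↔ InAdd R G M := Iff.rfl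

lemma extClos_succ_succ_iff (G : ModuleCat.{u} R) (n : ℕ) (M : ModuleCat.{u} R) :
    ExtClos R G (n + 2) M ↔ ∃ (W X Y : ModuleCat.{u} R) (i : Y →ₗ[R] M × W)
      (p : (M × W : Type u) →ₗ[R] X),
      Function.Injective i ∧ Function.Surjective p ∧
      LinearMap.range i = LinearMap.ker p ∧
      ((ExtClos R G (n + 1) Y ∧ InAdd R G X) ∨ (InAdd R G Y ∧ ExtClos R G (n + 1) X)) :=
  Iff.rfl

lemma extClos_star_aux (G : ModuleCat.{u} R) : ∀ (b : ℕ), 1 ≤ b → ∀ (a : ℕ), 1 ≤ a →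
    ∀ (E E' X Y : ModuleCat.{u} R) (i : X →ₗ[R] E × E') (p : (E × E' : Type u) →ₗ[R] Y),
    Function.Injective i → Function.Surjective p →
    LinearMap.range i = LinearMap.ker p →
    ExtClos R G a X → ExtClos R G b Y → ExtClos R G (a + b) E := by
  intro b
  induction b using Nat.strong_induction_on with
  | _ b IH =>
  intro hb a ha E E' X Y i p hi hp hip hX hY
  rcases b with _ | (_ | n)
  · omega
  · -- b = 1 : direct construction
    obtain ⟨m, rfl⟩ : ∃ m, a = m + 1 := ⟨a - 1, by omega⟩
    rw [show m + 1 + 1 = m + 2 from rfl, extClos_succ_succ_iff]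
    exact ⟨E', Y, X, i, p, hi, hp, hip, Or.inl ⟨hX, hY⟩⟩
  · -- b = n + 2 : inductive step
    rw [show (n + 1 + 1 : ℕ) = n + 2 from rfl, extClos_succ_succ_iff] at hY
    obtain ⟨W, X', Y', i', p', hi', hp', hip', hcase⟩ := hY
    -- the map q : (E × E') × W → Y × W
    set q : ((E × E' : Type u) × W) →ₗ[R] (Y × W : Type u) :=
      p.prodMap LinearMap.id with hqdef
    have hq_apply : ∀ v : ((E × E' : Type u) × W), q v = (p v.1, v.2) := fun v => rfl
    have hq_surj : Function.Surjective q := by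
      rintro ⟨y, w⟩
      obtain ⟨ee, hee⟩ := hp y
      exact ⟨(ee, w), by rw [hq_apply, hee]⟩
    -- the pullback P
    set P : Submodule R ((E × E' : Type u) × W) := (LinearMap.range i').comap q with hPdef
    set PM : ModuleCat.{u} R := ModuleCat.of R P with hPMdef
    -- the map j : X → P
    have hpi : ∀ x : X, p (i x) = 0 := by
      intro x
      have : i x ∈ LinearMap.ker p := hip ▸ LinearMap.mem_range_self i x
      exact this
    set f : X →ₗ[R] ((E × E' : Type u) × W) :=
      (LinearMap.inl R (E × E' : Type u) W).comp i with hfdef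
    have hf_apply : ∀ x : X, f x = (i x, 0) := fun x => rfl
    have hfP : ∀ x : X, f x ∈ P := by
      intro x
      show q (f x) ∈ LinearMap.range i'
      have : q (f x) = 0 := by
        rw [hf_apply, hq_apply, hpi]; rfl
      rw [this]
      exact Submodule.zero_mem _
    set j : X →ₗ[R] P := LinearMap.codRestrict P f hfP with hjdef
    have hj_inj : Function.Injective j := by
      intro x y hxy
      have h1 : f x = f y := congrArg Subtype.val hxy
      rw [hf_apply, hf_apply] at h1
      exact hi (congrArg Prod.fst h1)
    -- the map r : P → Y'
    set g : P →ₗ[R] LinearMap.range i' :=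
      LinearMap.codRestrict (LinearMap.range i') (q.comp P.subtype) (fun z => z.2) with hgdef
    set e : Y' ≃ₗ[R] LinearMap.range i' := LinearEquiv.ofInjective i' hi' with hedef
    set r : P →ₗ[R] Y' := e.symm.toLinearMap.comp g with hrdef
    have hr : ∀ z : P, i' (r z) = q (z : ((E × E' : Type u) × W)) := by
      intro z
      exact LinearEquiv.ofInjective_symm_apply (f := i') (h := hi') (g z)
    have hr_surj : Function.Surjective r := by
      intro y'
      obtain ⟨ee, hee⟩ := hp (i' y').1
      have hmem : ((ee, (i' y').2) : ((E × E' : Type u) × W)) ∈ P := by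
        show q (ee, (i' y').2) ∈ LinearMap.range i'
        have : q (ee, (i' y').2) = i' y' := by
          rw [hq_apply, hee]
        rw [this]
        exact LinearMap.mem_range_self _ _
      refine ⟨⟨(ee, (i' y').2), hmem⟩, ?_⟩
      apply hi'
      rw [hr]
      show q (ee, (i' y').2) = i' y'
      rw [hq_apply, hee]
    have hjr : LinearMap.range j = LinearMap.ker r := by
      ext z
      simp only [LinearMap.mem_range, LinearMap.mem_ker]
      constructor
      · rintro ⟨x, rfl⟩
        apply hi'
        rw [hr, map_zero]
        show q (f x) = 0
        rw [hf_apply, hq_apply, hpi]; rfl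
      · intro hz
        have hqz : q (z : ((E × E' : Type u) × W)) = 0 := by
          rw [← hr z, hz, map_zero]
        rw [hq_apply] at hqz
        have hz1 : p (z : ((E × E' : Type u) × W)).1 = 0 := congrArg Prod.fst hqz
        have hz2 : (z : ((E × E' : Type u) × W)).2 = 0 := congrArg Prod.snd hqz
        have : (z : ((E × E' : Type u) × W)).1 ∈ LinearMap.range i := by
          rw [hip]
          exact hz1
        obtain ⟨x, hx⟩ := this
        refine ⟨x, ?_⟩
        apply Subtype.ext
        show f x = (z : ((E × E' : Type u) × W))
        rw [hf_apply]
        exact Prod.ext hx hz2.symm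
    -- the first short exact sequence : 0 → X → P ⊕ 0 → Y' → 0
    set Z : ModuleCat.{u} R := ModuleCat.of R PUnit.{u+1} with hZdef
    set i₁ : X →ₗ[R] (PM × Z : Type u) := (LinearMap.inl R P PUnit.{u+1}).comp j with hi₁def
    set p₁ : (PM × Z : Type u) →ₗ[R] Y' := r.comp (LinearMap.fst R P PUnit.{u+1}) with hp₁def
    have hi₁_inj : Function.Injective i₁ :=
      fun x y hxy => hj_inj (congrArg Prod.fst hxy)
    have hp₁_surj : Function.Surjective p₁ := by
      intro y'
      obtain ⟨z, hz⟩ := hr_surj y'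
      exact ⟨(z, PUnit.unit), hz⟩
    have hip₁ : LinearMap.range i₁ = LinearMap.ker p₁ := by
      ext v
      simp only [LinearMap.mem_range, LinearMap.mem_ker]
      constructor
      · rintro ⟨x, rfl⟩
        show r (j x) = 0
        have : j x ∈ LinearMap.ker r := hjr ▸ LinearMap.mem_range_self j x
        exact this
      · intro hv
        have : v.1 ∈ LinearMap.range j := by
          rw [hjr]
          exact hv
        obtain ⟨x, hx⟩ := this
        exact ⟨x, Prod.ext hx (Subsingleton.elim _ _)⟩
    -- the second short exact sequence : 0 → P → E ⊕ (E' ⊕ W) → X' → 0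
    set W₂ : ModuleCat.{u} R := ModuleCat.of R (E' × W : Type u) with hW₂def
    set assoc : ((E × E') × W : Type u) ≃ₗ[R] (E × (E' × W) : Type u) :=
      LinearEquiv.prodAssoc R E E' W with hassocdef
    set i₂ : (PM : Type u) →ₗ[R] (E × W₂ : Type u) :=
      assoc.toLinearMap.comp P.subtype with hi₂def
    set p₂ : (E × W₂ : Type u) →ₗ[R] X' :=
      p'.comp (q.comp assoc.symm.toLinearMap) with hp₂def
    have hi₂_inj : Function.Injective i₂ :=
      assoc.injective.comp Subtype.val_injective
    have hp₂_surj : Function.Surjective p₂ :=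
      hp'.comp (hq_surj.comp assoc.symm.surjective)
    have hip₂ : LinearMap.range i₂ = LinearMap.ker p₂ := by
      ext v
      simp only [LinearMap.mem_range, LinearMap.mem_ker]
      constructor
      · rintro ⟨z, rfl⟩
        show p' (q (assoc.symm (assoc (P.subtype z)))) = 0
        rw [LinearEquiv.symm_apply_apply]
        have hz2 : q (P.subtype z) ∈ LinearMap.range i' := z.2
        rw [hip'] at hz2
        exact hz2
      · intro hv
        have hmem : assoc.symm v ∈ P := by
          show q (assoc.symm v) ∈ LinearMap.range i'
          rw [hip']
          exact hv
        refine ⟨⟨assoc.symm v, hmem⟩, ?_⟩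
        show assoc (assoc.symm v) = v
        exact assoc.apply_symm_apply v
    -- combine using the induction hypothesis
    rcases hcase with ⟨hY'', hX'⟩ | ⟨hY'', hX'⟩
    · have hP : ExtClos R G (a + (n + 1)) PM :=
        IH (n + 1) (by omega) (by omega) a ha PM Z X Y' i₁ p₁
          hi₁_inj hp₁_surj hip₁ hX hY''
      have hE : ExtClos R G ((a + (n + 1)) + 1) E :=
        IH 1 (by omega) le_rfl (a + (n + 1)) (by omega) E W₂ PM X' i₂ p₂
          hi₂_inj hp₂_surj hip₂ hP ((extClos_one_iff R G X').mpr hX')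
      rw [show a + (n + 1 + 1) = (a + (n + 1)) + 1 from by omega]
      exact hE
    · have hP : ExtClos R G (a + 1) PM :=
        IH 1 (by omega) le_rfl a ha PM Z X Y' i₁ p₁
          hi₁_inj hp₁_surj hip₁ hX ((extClos_one_iff R G Y').mpr hY'')
      have hE : ExtClos R G ((a + 1) + (n + 1)) E :=
        IH (n + 1) (by omega) (by omega) (a + 1) (by omega) E W₂ PM X' i₂ p₂
          hi₂_inj hp₂_surj hip₂ hP hX'
      rw [show a + (n + 1 + 1) = (a + 1) + (n + 1) from by omega]
      exact hE

/-- If `E` fits into a short exact sequence `0 → X → E ⊕ E' → Y → 0` with `X ∈ |G|ₐ` and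
`Y ∈ |G|_b` (`a, b ≥ 1`), then `E ∈ |G|_{a+b}`. -/
theorem extClos_star [IsNoetherianRing R] (G : ModuleCat.{u} R) (a b : ℕ)
    (ha : 1 ≤ a) (hb : 1 ≤ b) (E E' X Y : ModuleCat.{u} R)
    (i : X →ₗ[R] E × E') (p : (E × E' : Type u) →ₗ[R] Y)
    (hi : Function.Injective i) (hp : Function.Surjective p)
    (hip : LinearMap.range i = LinearMap.ker p)
    (hX : ExtClos R G a X) (hY : ExtClos R G b Y) :
    ExtClos R G (a + b) E :=
  extClos_star_aux R G b hb a ha E E' X Y i p hi hp hip hX hY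
end

section
/- Let R be a commutative Noetherian ring, n ≥ 0, and suppose 0 → M → C_0 → C_1 → ⋯ → C_{n−1} → N → 0 is an exact sequence of finitely generated R-modules. Then an n-th syzygy Ω^n_R(N) belongs to |M ⊕ (⊕_{i=0}^{n−1} Ω^{i+1}_R(C_i))|_{n+1}, where |−|_k denotes the k-fold extension closure of the additive closure. -/
universe u

variable (R : Type u) [CommRing R]

/-!
Let `G = M ⊕ ⨁ᵢ Ω^{i+1}Cᵢ`. Cut the exact sequence into short exact sequences
`0 → Zᵢ → Cᵢ → Zᵢ₊₁ → 0` with `Z₀ = M` and `Zₙ = N`. Given a `j`-th syzygy `T` of `Zⱼ`, a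
horseshoe argument (splicing resolutions of `Zⱼ` and `Zⱼ₊₁` into one of `Cⱼ`, whose kernels are
then short exact by the snake lemma) yields a short exact sequence
`0 → Ω^{j+1}Cⱼ → Ω^{j+1}Zⱼ₊₁ → T → 0`; noetherianity keeps all kernels finitely generated. The
left term lies in `add G`, so starting from `Ω⁰Z₀ = M ∈ |G|₁` each step raises the level of the
extension closure by one, and `ΩⁿN ∈ |G|ₙ₊₁`.
-/

open LinearMap
open Function (Injective Surjective Exact)

section ShortExact

variable {R} {A B C D : Type*} [AddCommGroup A] [Module R A] [AddCommGroup B] [Module R B]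
  [AddCommGroup C] [Module R C] [AddCommGroup D] [Module R D]

structure IsShortExact (f : A →ₗ[R] B) (g : B →ₗ[R] C) : Prop where
  injective : Injective f
  exact : Exact f g
  surjective : Surjective g

theorem IsShortExact.comp_linearEquiv {f : A →ₗ[R] B} {g : B →ₗ[R] C} (h : IsShortExact f g)
    (e : C ≃ₗ[R] D) : IsShortExact f (e.toLinearMap ∘ₗ g) :=
  ⟨h.injective, h.exact.comp_injective _ e.injective e.map_zero, e.surjective.comp h.surjective⟩

theorem isShortExact_subtype_rangeRestrict {f : A →ₗ[R] B} {g : B →ₗ[R] C}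
    (h : range f = ker g) : IsShortExact (range f).subtype g.rangeRestrict :=
  ⟨Submodule.injective_subtype _, by rw [exact_iff, ker_rangeRestrict, Submodule.range_subtype, h],
    surjective_rangeRestrict g⟩

theorem isShortExact_inclusion_restrict {F : A →ₗ[R] B} (hF : Surjective F) (π : B →ₗ[R] C) :
    IsShortExact (Submodule.inclusion (ker_le_ker_comp F π))
      (F.restrict (p := ker (π ∘ₗ F)) (q := ker π) fun _ hx => mem_ker.mpr (mem_ker.mp hx)) := by
  refine ⟨Submodule.inclusion_injective _, fun x => ?_, fun y => ?_⟩
  · rw [Subtype.ext_iff, coe_restrict_apply]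
    exact ⟨fun hx => ⟨⟨x, hx⟩, rfl⟩, by rintro ⟨y, rfl⟩; exact y.2⟩
  · obtain ⟨x, hx⟩ := hF y
    have hx' : x ∈ ker (π ∘ₗ F) := by simp [hx]
    exact ⟨⟨x, hx'⟩, Subtype.ext hx⟩

end ShortExact

section Ladder

variable {R} {M₁ M₂ M₃ N₁ N₂ N₃ : Type*} [AddCommGroup M₁] [Module R M₁] [AddCommGroup M₂]
  [Module R M₂] [AddCommGroup M₃] [Module R M₃] [AddCommGroup N₁] [Module R N₁] [AddCommGroup N₂]
  [Module R N₂] [AddCommGroup N₃] [Module R N₃]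
  {i₁ : M₁ →ₗ[R] M₂} {p₁ : M₂ →ₗ[R] M₃} {ι : N₁ →ₗ[R] N₂} {π : N₂ →ₗ[R] N₃}
  {α : M₁ →ₗ[R] N₁} {β : M₂ →ₗ[R] N₂} {γ : M₃ →ₗ[R] N₃}

theorem surjective_of_ladder (h₁ : ∀ x, β (i₁ x) = ι (α x))
    (h₂ : ∀ x, π (β x) = γ (p₁ x))
    (hp₁ : Surjective p₁) (hιπ : Exact ι π) (hα : Surjective α) (hγ : Surjective γ) :
    Surjective β := by
  intro b
  obtain ⟨z, hz⟩ := hγ (π b)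
  obtain ⟨x, rfl⟩ := hp₁ z
  have hb : b - β x ∈ range ι := by
    rw [← hιπ.linearMap_ker_eq, mem_ker, map_sub, h₂, hz, sub_self]
  obtain ⟨a, ha⟩ := hb
  obtain ⟨y, rfl⟩ := hα a
  refine ⟨x + i₁ y, ?_⟩
  rw [map_add, h₁, ha, add_sub_cancel]

theorem exists_isShortExact_ker_of_ladder (h₁ : ∀ x, β (i₁ x) = ι (α x))
    (h₂ : ∀ x, π (β x) = γ (p₁ x))
    (hip : IsShortExact i₁ p₁) (hι : Injective ι) (hιπ : Exact ι π) (hα : Surjective α) :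
    ∃ (f : ker α →ₗ[R] ker β) (g : ker β →ₗ[R] ker γ), IsShortExact f g := by
  have hf : ∀ x ∈ ker α, i₁ x ∈ ker β := fun x hx => by
    rw [mem_ker, h₁, mem_ker.mp hx, map_zero]
  have hg : ∀ x ∈ ker β, p₁ x ∈ ker γ := fun x hx => by
    rw [mem_ker, ← h₂, mem_ker.mp hx, map_zero]
  refine ⟨i₁.restrict hf, p₁.restrict hg, ⟨fun x y hxy => ?_, fun x => ?_, fun z => ?_⟩⟩
  · exact Subtype.ext (hip.injective (congrArg Subtype.val hxy))
  · rw [Subtype.ext_iff, coe_restrict_apply]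
    refine ⟨fun hx => ?_, by rintro ⟨y, rfl⟩; exact hip.exact.apply_apply_eq_zero y⟩
    obtain ⟨y, hy⟩ := (hip.exact x).mp hx
    have hy' : y ∈ ker α := mem_ker.mpr <| hι <| by
      rw [map_zero, ← h₁, hy]
      exact mem_ker.mp x.2
    exact ⟨⟨y, hy'⟩, Subtype.ext hy⟩
  · obtain ⟨x, hx⟩ := hip.surjective z
    have hβx : β x ∈ range ι := by
      rw [← hιπ.linearMap_ker_eq, mem_ker, h₂, hx]
      exact mem_ker.mp z.2
    obtain ⟨a, ha⟩ := hβx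
    obtain ⟨y, rfl⟩ := hα a
    have hmem : x - i₁ y ∈ ker β := by
      rw [mem_ker, map_sub, h₁, ha, sub_self]
    exact ⟨⟨_, hmem⟩, Subtype.ext (by simp [hx, hip.exact.apply_apply_eq_zero])⟩

end Ladder

section Closure

variable {R}

theorem DirectSummand.refl (M : ModuleCat.{u} R) : DirectSummand R M M :=
  ⟨LinearMap.id, LinearMap.id, rfl⟩

theorem DirectSummand.trans {M N P : ModuleCat.{u} R} (hMN : DirectSummand R M N)
    (hNP : DirectSummand R N P) : DirectSummand R M P := by
  obtain ⟨s, r, hsr⟩ := hMN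
  obtain ⟨s', r', hsr'⟩ := hNP
  refine ⟨s' ∘ₗ s, r ∘ₗ r', ?_⟩
  show r ∘ₗ (r' ∘ₗ s') ∘ₗ s = _
  rw [hsr', id_comp, hsr]

theorem DirectSummand.of_linearEquiv {M N : ModuleCat.{u} R} (e : M ≃ₗ[R] N) :
    DirectSummand R M N :=
  ⟨e.toLinearMap, e.symm.toLinearMap, by ext; simp⟩

theorem DirectSummand.prodMap {M M' N N' : ModuleCat.{u} R} (hM : DirectSummand R M M')
    (hN : DirectSummand R N N') :
    DirectSummand R (ModuleCat.of R (M × N)) (ModuleCat.of R (M' × N')) := by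
  obtain ⟨s, r, hsr⟩ := hM
  obtain ⟨s', r', hsr'⟩ := hN
  exact ⟨s.prodMap s', r.prodMap r', by rw [prodMap_comp, hsr, hsr', prodMap_id]⟩

theorem DirectSummand.pi {k : ℕ} {M N : ModuleCat.{u} R} (h : DirectSummand R M N) :
    DirectSummand R (ModuleCat.of R (Fin k → M)) (ModuleCat.of R (Fin k → N)) := by
  obtain ⟨s, r, hsr⟩ := h
  exact ⟨s.compLeft (Fin k), r.compLeft (Fin k),
    LinearMap.ext fun x => funext fun i => LinearMap.congr_fun hsr (x i)⟩

theorem directSummand_prod_left (M : ModuleCat.{u} R) (N : Type u) [AddCommGroup N] [Module R N] :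
    DirectSummand R M (ModuleCat.of R (M × N)) :=
  ⟨inl R M N, fst R M N, rfl⟩

theorem directSummand_prod_right (M : Type u) [AddCommGroup M] [Module R M] (N : ModuleCat.{u} R) :
    DirectSummand R N (ModuleCat.of R (M × N)) :=
  ⟨inr R M N, snd R M N, rfl⟩

theorem directSummand_pi {m : ℕ} (φ : Fin m → ModuleCat.{u} R) (j : Fin m) :
    DirectSummand R (φ j) (ModuleCat.of R ((i : Fin m) → φ i)) :=
  ⟨single R (fun i => φ i) j, proj j, proj_comp_single_same R (fun i => (φ i : Type u)) j⟩

theorem directSummand_pi_castSucc {m : ℕ} (φ : Fin (m + 1) → ModuleCat.{u} R)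
    (ψ : Fin m → ModuleCat.{u} R) (h : ∀ i, φ i.castSucc = ψ i) :
    DirectSummand R (ModuleCat.of R ((i : Fin m) → ψ i))
      (ModuleCat.of R ((i : Fin (m + 1)) → φ i)) := by
  obtain rfl : (fun i => φ i.castSucc) = ψ := funext h
  refine ⟨LinearMap.pi (Fin.lastCases 0 proj), LinearMap.pi fun i => proj i.castSucc, ?_⟩
  ext x i
  simp

theorem InAdd.of_directSummand {G M : ModuleCat.{u} R} (h : DirectSummand R M G) : InAdd R G M :=
  ⟨1, h.trans ⟨LinearMap.pi fun _ => LinearMap.id, proj 0, rfl⟩⟩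

theorem InAdd.mono {G G' M : ModuleCat.{u} R} (hG : DirectSummand R G G') (hM : InAdd R G M) :
    InAdd R G' M :=
  hM.imp fun _ hk => hk.trans hG.pi

theorem ExtClos.mono {G G' M : ModuleCat.{u} R} (hG : DirectSummand R G G') :
    ∀ {k : ℕ}, ExtClos R G k M → ExtClos R G' k M
  | 0, hM => hM
  | 1, hM => InAdd.mono hG hM
  | _ + 2, hM => by
    obtain ⟨W, X, Y, i, p, hi, hp, hip, hXY⟩ := hM
    exact ⟨W, X, Y, i, p, hi, hp, hip,
      hXY.imp (fun h => ⟨h.1.mono hG, h.2.mono hG⟩) (fun h => ⟨h.1.mono hG, h.2.mono hG⟩)⟩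

theorem ExtClos.add_two_of_isShortExact {G Y M X : ModuleCat.{u} R} {k : ℕ} {f : Y →ₗ[R] M}
    {g : M →ₗ[R] X} (hfg : IsShortExact f g) (hY : InAdd R G Y) (hX : ExtClos R G (k + 1) X) :
    ExtClos R G (k + 2) M := by
  let W := ModuleCat.of R PUnit.{u + 1}
  refine ⟨W, X, Y, inl R M W ∘ₗ f, g ∘ₗ fst R M W,
    inl_injective.comp hfg.injective, hfg.surjective.comp fst_surjective, ?_, Or.inr ⟨hY, hX⟩⟩
  ext ⟨m, w⟩
  obtain rfl := Subsingleton.elim w 0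
  simpa [Prod.ext_iff] using (hfg.exact m).symm

end Closure

section Syzygy

variable {R}

theorem IsSyzygy.of_linearEquiv {M M' K : ModuleCat.{u} R} (e : M ≃ₗ[R] M') :
    ∀ {k : ℕ}, IsSyzygy R k K M → IsSyzygy R k K M'
  | 0, ⟨e'⟩ => ⟨e'.trans e⟩
  | _ + 1, ⟨m, f, hf, h⟩ => ⟨m, e.toLinearMap ∘ₗ f, e.surjective.comp hf, by rwa [e.ker_comp]⟩

theorem IsSyzygy.succ_of_linearEquiv {P : Type u} [AddCommGroup P] [Module R P] {k n : ℕ}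
    {K M : ModuleCat.{u} R} (e : (Fin k → R) ≃ₗ[R] P) {f : P →ₗ[R] M} (hf : Surjective f)
    (h : IsSyzygy R n K (ModuleCat.of R (ker f))) : IsSyzygy R (n + 1) K M :=
  ⟨k, f ∘ₗ e.toLinearMap, hf.comp e.surjective, h.of_linearEquiv <| e.symm.ofSubmodules _ _ <| by
    rw [Submodule.map_equiv_eq_comap_symm, e.symm_symm, ker_comp]⟩

theorem IsShortExact.exists_isShortExact_syzygy_succ [IsNoetherianRing R] {j : ℕ}
    {A B Z T : ModuleCat.{u} R} [Module.Finite R B] {ι : A →ₗ[R] B} {π : B →ₗ[R] Z}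
    (hιπ : IsShortExact ι π)
    (hT : IsSyzygy R j T A) :
    ∃ (K T' : ModuleCat.{u} R) (f : K →ₗ[R] T') (g : T' →ₗ[R] T),
      IsSyzygy R (j + 1) K B ∧ IsSyzygy R (j + 1) T' Z ∧ IsShortExact f g := by
  induction j generalizing A B Z T with
  | zero =>
    obtain ⟨e⟩ := hT
    obtain ⟨k, F, hF⟩ := Module.Finite.exists_fin' R B
    let eT : ker π ≃ₗ[R] T := (LinearEquiv.ofEq _ _ hιπ.exact.linearMap_ker_eq).trans
      ((LinearEquiv.ofInjective ι hιπ.injective).symm.trans e.symm)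
    exact ⟨ModuleCat.of R (ker F), ModuleCat.of R (ker (π ∘ₗ F)), _, _,
      ⟨k, F, hF, ⟨.refl R _⟩⟩, ⟨k, π ∘ₗ F, hιπ.surjective.comp hF, ⟨.refl R _⟩⟩,
      (isShortExact_inclusion_restrict hF π).comp_linearEquiv eT⟩
  | succ j ih =>
    obtain ⟨m, gA, hgA, hT⟩ := hT
    have : Module.Finite R Z := .of_surjective π hιπ.surjective
    obtain ⟨k, h, hh⟩ := Module.Finite.exists_fin' R Z
    obtain ⟨h', hh'⟩ := Module.projective_lifting_property π h hιπ.surjective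
    let F := coprod (ι ∘ₗ gA) h'
    have h₁ (x : Fin m → R) : F (inl R _ (Fin k → R) x) = ι (gA x) := by simp [F]
    have h₂ (x : (Fin m → R) × (Fin k → R)) : π (F x) = h (snd R _ _ x) := by
      simp [F, ← hh', hιπ.exact.apply_apply_eq_zero]
    have hsplit : IsShortExact (inl R (Fin m → R) (Fin k → R)) (snd R _ _) :=
      ⟨inl_injective, .inl_snd, snd_surjective⟩
    obtain ⟨f, g, hfg⟩ := exists_isShortExact_ker_of_ladder h₁ h₂ hsplit hιπ.injective hιπ.exact hgA
    obtain ⟨K, T', f', g', hK, hT', hfg'⟩ := ih (A := ModuleCat.of R (ker gA))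
      (B := ModuleCat.of R (ker F)) (Z := ModuleCat.of R (ker h)) hfg hT
    have hF : Surjective F := surjective_of_ladder h₁ h₂ snd_surjective hιπ.exact hgA hh
    let eFin : (Fin (m + k) → R) ≃ₗ[R] (Fin m → R) × (Fin k → R) :=
      (LinearEquiv.funCongrLeft R R finSumFinEquiv).trans
        (LinearEquiv.sumArrowLequivProdArrow (Fin m) (Fin k) R R)
    exact ⟨K, T', f', g', .succ_of_linearEquiv eFin hF hK, ⟨k, h, hh, hT'⟩, hfg'⟩

theorem exists_syzygies_extClos_of_isShortExact [IsNoetherianRing R] {n : ℕ}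
    (Z : Fin (n + 1) → ModuleCat.{u} R) (B : Fin n → ModuleCat.{u} R)
    (hB : ∀ i, Module.Finite R (B i)) (ι : ∀ i, Z i.castSucc →ₗ[R] B i)
    (π : ∀ i, B i →ₗ[R] Z i.succ) (hιπ : ∀ i, IsShortExact (ι i) (π i)) :
    ∃ (K : Fin n → ModuleCat.{u} R) (T : ModuleCat.{u} R),
      (∀ i : Fin n, IsSyzygy R (i + 1) (K i) (B i)) ∧ IsSyzygy R n T (Z (Fin.last n)) ∧
      ExtClos R (ModuleCat.of R (Z 0 × ((i : Fin n) → K i))) (n + 1) T := by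
  induction n with
  | zero =>
    exact ⟨Fin.elim0, Z 0, fun i => i.elim0, ⟨.refl R _⟩,
      .of_directSummand (directSummand_prod_left _ _)⟩
  | succ n ih =>
    obtain ⟨K, T, hK, hT, hE⟩ := ih (fun i => Z i.castSucc) (fun i => B i.castSucc)
      (fun i => hB _) (fun i => ι i.castSucc) (fun i => π i.castSucc) (fun i => hιπ _)
    have := hB (Fin.last n)
    obtain ⟨Knew, T', f, g, hKnew, hT', hfg⟩ :=
      (hιπ (Fin.last n)).exists_isShortExact_syzygy_succ hT
    obtain ⟨K', hK'_castSucc, hK'_last⟩ : ∃ K' : Fin (n + 1) → ModuleCat.{u} R,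
        (∀ i, K' i.castSucc = K i) ∧ K' (Fin.last n) = Knew :=
      ⟨Fin.snoc K Knew, fun i => Fin.snoc_castSucc .., Fin.snoc_last ..⟩
    have hG : DirectSummand R (ModuleCat.of R (Z 0 × ((i : Fin n) → K i)))
        (ModuleCat.of R (Z 0 × ((i : Fin (n + 1)) → K' i))) :=
      (DirectSummand.refl _).prodMap (directSummand_pi_castSucc K' K hK'_castSucc)
    have hKnew' : InAdd R (ModuleCat.of R (Z 0 × ((i : Fin (n + 1)) → K' i))) Knew := by
      have := directSummand_pi K' (Fin.last n)
      rw [hK'_last] at this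
      exact .of_directSummand (this.trans (directSummand_prod_right _ _))
    refine ⟨K', T', Fin.lastCases ?_ fun i => ?_, hT',
      (hE.mono hG).add_two_of_isShortExact hfg hKnew'⟩
    · rw [hK'_last]
      exact hKnew
    · rw [hK'_castSucc]
      exact hK i

end Syzygy

/-- `C 0` is `M`, `C (i + 1)` is `Cᵢ` for `i < n`, `C (n + 1)` is `N`, and the `d i` are the maps
of the exact sequence. -/
theorem syzygy_of_exact_sequence_in_extClos [IsNoetherianRing R] (n : ℕ)
    (C : Fin (n + 2) → ModuleCat.{u} R) (hfg : ∀ i, Module.Finite R (C i))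
    (d : ∀ i : Fin (n + 1), C i.castSucc →ₗ[R] C i.succ)
    (hinj : Function.Injective (d 0))
    (hsurj : Function.Surjective (d (Fin.last n)))
    (hex : ∀ i : Fin n, LinearMap.range (d i.castSucc) = LinearMap.ker (d i.succ)) :
    ∃ (K : Fin n → ModuleCat.{u} R) (S : ModuleCat.{u} R),
      (∀ i : Fin n, IsSyzygy R (i + 1) (K i) (C i.succ.castSucc)) ∧
      IsSyzygy R n S (C (Fin.last (n + 1))) ∧
      ExtClos R (ModuleCat.of R ((C 0 : Type u) × ((i : Fin n) → K i))) (n + 1) S := by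
  obtain ⟨K, T, hK, hT, hE⟩ := exists_syzygies_extClos_of_isShortExact
    (fun i => ModuleCat.of R (range (d i))) (fun i => C i.succ.castSucc) (fun i => hfg _)
    (fun i => (range (d i.castSucc)).subtype) (fun i => (d i.succ).rangeRestrict)
    (fun i => isShortExact_subtype_rangeRestrict (hex i))
  have eM : range (d 0) ≃ₗ[R] C 0 := (LinearEquiv.ofInjective (d 0) hinj).symm
  have eN : range (d (Fin.last n)) ≃ₗ[R] C (Fin.last (n + 1)) :=
    LinearEquiv.ofTop _ (range_eq_top.mpr hsurj)
  exact ⟨K, T, hK, hT.of_linearEquiv eN,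
    hE.mono ((DirectSummand.of_linearEquiv eM).prodMap
      (.refl (ModuleCat.of R ((i : Fin n) → K i))))⟩
end

section
/- Let R be a commutative Noetherian ring and M a finitely generated R-module satisfying Serre's condition (S_1). Then there exists a filtration 0 = M_0 ⊆ M_1 ⊆ ⋯ ⊆ M_l = M with l ≤ Σ_{p ∈ Ass_R(M)} ℓℓ(R_p), such that for each i there is a minimal prime p_i of R with p_i · (M_i/M_{i−1}) = 0, i.e., M_i/M_{i−1} is a module over R/p_i. -/
/-!
Let `I = ∏_{p ∈ Ass M} p ^ ℓℓ(R_p)`. For a minimal prime `q`, `(q R_q) ^ ℓℓ(R_q) = 0`, and since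
`q ^ ℓℓ(R_q)` is finitely generated some `s ∉ q` annihilates it. If `IM ≠ 0`, an associated prime
`q` of `IM` is an associated prime of `M`, hence minimal by `(S₁)`; the corresponding `s` kills
`I ⊆ q ^ ℓℓ(R_q)`, hence `IM`, so `s ∈ q`, a contradiction. Thus `IM = 0`, and writing
`I = p₁ ⋯ p_l` with each `p` repeated `ℓℓ(R_p)` times, `M_i = p_{i+1} ⋯ p_l M` is the filtration.
-/

universe u

open scoped Classical in
/-- The Loewy length of the localization `R_p`: the least `n` with `(p R_p)ⁿ = 0`
(for `p` prime; junk value `0` otherwise). -/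
noncomputable def loewyLengthAt (R : Type u) [CommRing R] (p : Ideal R) : ℕ :=
  if hp : p.IsPrime then
    sInf {n : ℕ | (p.map (algebraMap R (Localization (@Ideal.primeCompl R _ p hp)))) ^ n = ⊥}
  else 0

section Filtration

variable {R : Type u} [CommRing R] {M : Type u} [AddCommGroup M] [Module R M]

theorem List.prod_drop_smul_top_eq_getElem_smul (L : List (Ideal R)) {i : ℕ}
    (hi : i < L.length) :
    (L.drop i).prod • (⊤ : Submodule R M) = L[i] • (L.drop (i + 1)).prod • ⊤ := by
  rw [List.drop_eq_getElem_cons hi, List.prod_cons, Submodule.mul_smul]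

theorem exists_filtration_of_list_prod_smul_top_eq_bot (L : List (Ideal R))
    (hL : L.prod • (⊤ : Submodule R M) = ⊥) :
    ∃ f : Fin (L.length + 1) → Submodule R M,
      Monotone f ∧ f 0 = ⊥ ∧ f (Fin.last L.length) = ⊤ ∧
      ∀ i : Fin L.length, ∀ m ∈ f i.succ, ∀ a ∈ L[i], a • m ∈ f i.castSucc := by
  refine ⟨fun i => (L.drop i).prod • ⊤, Fin.monotone_iff_le_succ.mpr fun i => ?_, by simpa,
    by simp, fun i m hm a ha => ?_⟩
  · simp only [Fin.val_castSucc, L.prod_drop_smul_top_eq_getElem_smul i.isLt, Fin.val_succ]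
    exact Submodule.smul_le_right
  · simp only [Fin.val_castSucc, L.prod_drop_smul_top_eq_getElem_smul i.isLt]
    exact Submodule.smul_mem_smul ha hm

end Filtration

section Noetherian

variable {R : Type u} [CommRing R] [IsNoetherianRing R]

theorem Ideal.isNilpotent_map_localizationAtPrime {q : Ideal R} [q.IsPrime]
    (hq : q ∈ minimalPrimes R) : IsNilpotent (q.map (algebraMap R (Localization.AtPrime q))) := by
  rw [Localization.AtPrime.map_eq_maximalIdeal, ← isArtinianRing_iff_isNilpotent_maximalIdeal,
    isArtinianRing_iff_krullDimLE_zero, ringKrullDimZero_iff_ringKrullDim_eq_zero,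
    IsLocalization.AtPrime.ringKrullDim_eq_height q, Ideal.height_eq_zero_iff.mpr hq]
  rfl

theorem map_pow_loewyLengthAt_eq_bot {q : Ideal R} [q.IsPrime] (hq : q ∈ minimalPrimes R) :
    q.map (algebraMap R (Localization.AtPrime q)) ^ loewyLengthAt R q = ⊥ := by
  rw [loewyLengthAt, dif_pos ‹_›]
  exact Nat.sInf_mem (Ideal.isNilpotent_map_localizationAtPrime hq)

theorem Ideal.not_annihilator_le_of_map_eq_bot {q I : Ideal R} [q.IsPrime]
    (hI : I.map (algebraMap R (Localization.AtPrime q)) = ⊥) : ¬ I.annihilator ≤ q := by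
  change ¬ Module.annihilator R I ≤ (⟨q, ‹_›⟩ : PrimeSpectrum R).asIdeal
  rw [← Module.mem_support_iff_of_finite, Module.notMem_support_iff']
  rintro ⟨b, hb⟩
  have hb0 : algebraMap R (Localization.AtPrime q) b = 0 := by
    rw [← Ideal.mem_bot, ← hI]
    exact Ideal.mem_map_of_mem _ hb
  obtain ⟨⟨r, hr⟩, hrb⟩ := (IsLocalization.map_eq_zero_iff q.primeCompl _ b).mp hb0
  exact ⟨r, hr, Subtype.ext hrb⟩

theorem not_annihilator_pow_loewyLengthAt_le {q : Ideal R} (hq : q ∈ minimalPrimes R) :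
    ¬ (q ^ loewyLengthAt R q).annihilator ≤ q :=
  have := hq.1.1
  Ideal.not_annihilator_le_of_map_eq_bot (by rw [Ideal.map_pow, map_pow_loewyLengthAt_eq_bot hq])

variable {M : Type u} [AddCommGroup M] [Module R M]

theorem Ideal.smul_top_eq_bot_of_forall_associatedPrimes {I : Ideal R}
    (hI : ∀ q ∈ associatedPrimes R M, ¬ I.annihilator ≤ q) : I • (⊤ : Submodule R M) = ⊥ := by
  set N := I • (⊤ : Submodule R M)
  by_contra hN
  have := Submodule.nontrivial_iff_ne_bot.mpr hN
  obtain ⟨q, hq⟩ := associatedPrimes.nonempty R N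
  refine hI q (associatedPrimes.subset_of_injective N.injective_subtype hq) ?_
  calc I.annihilator ≤ N.annihilator := by
        rw [Submodule.le_annihilator_iff, ← Submodule.mul_smul, Submodule.annihilator_mul,
          Submodule.bot_smul]
    _ ≤ q := by
        rw [Submodule.annihilator, ← Submodule.annihilator_top]
        exact hq.annihilator_le

theorem prod_pow_loewyLengthAt_smul_top_eq_bot (hS1 : associatedPrimes R M ⊆ minimalPrimes R)
    {s : Finset (Ideal R)} (hs : associatedPrimes R M ⊆ s) :
    (∏ p ∈ s, p ^ loewyLengthAt R p) • (⊤ : Submodule R M) = ⊥ :=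
  Ideal.smul_top_eq_bot_of_forall_associatedPrimes fun _ hq hle =>
    not_annihilator_pow_loewyLengthAt_le (hS1 hq) <| (Submodule.annihilator_mono <|
      Ideal.prod_le_inf.trans (Finset.inf_le (f := fun p => p ^ loewyLengthAt R p) (hs hq))).trans
      hle

end Noetherian

theorem filtration_of_S1_general (R : Type u) [CommRing R] [IsNoetherianRing R]
    (M : Type u) [AddCommGroup M] [Module R M]
    (hS1 : associatedPrimes R M ⊆ minimalPrimes R)
    (hfin : (associatedPrimes R M).Finite) :
    ∃ (l : ℕ) (f : Fin (l + 1) → Submodule R M),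
      Monotone f ∧ f 0 = ⊥ ∧ f (Fin.last l) = ⊤ ∧
      l ≤ ∑ p ∈ hfin.toFinset, loewyLengthAt R p ∧
      ∀ i : Fin l, ∃ p ∈ minimalPrimes R,
        ∀ m ∈ f i.succ, ∀ a ∈ p, a • m ∈ f i.castSucc := by
  set s := hfin.toFinset
  set L := (∑ p ∈ s, Multiset.replicate (loewyLengthAt R p) p).toList
  have hmem : ∀ p ∈ L, p ∈ minimalPrimes R := by
    intro p hp
    obtain ⟨q, hq, hpq⟩ := Multiset.mem_sum.mp (Multiset.mem_toList.mp hp)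
    rw [Multiset.eq_of_mem_replicate hpq]
    exact hS1 (hfin.mem_toFinset.mp hq)
  have hlen : L.length = ∑ p ∈ s, loewyLengthAt R p := by simp [L]
  have hprod : L.prod = ∏ p ∈ s, p ^ loewyLengthAt R p := by simp [L, Multiset.prod_sum]
  obtain ⟨f, hmono, hbot, htop, hstep⟩ := exists_filtration_of_list_prod_smul_top_eq_bot L
    (hprod ▸ prod_pow_loewyLengthAt_smul_top_eq_bot hS1 (by simp [s]))
  exact ⟨L.length, f, hmono, hbot, htop, hlen.le,
    fun i => ⟨L[i], hmem _ (L.getElem_mem i.isLt), hstep i⟩⟩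

/-- If a finitely generated module `M` over a commutative Noetherian ring `R` satisfies
Serre's condition `(S₁)` (all associated primes of `M` are minimal primes of `R`), then `M`
has a filtration `0 = M₀ ⊆ ⋯ ⊆ M_l = M` with `l ≤ Σ_{p ∈ Ass M} ℓℓ(R_p)` whose successive
quotients are each annihilated by some minimal prime `pᵢ` of `R` (hence are `R⧸pᵢ`-modules). -/
theorem filtration_of_S1 (R : Type u) [CommRing R] [IsNoetherianRing R]
    (M : Type u) [AddCommGroup M] [Module R M] [Module.Finite R M]
    (hS1 : associatedPrimes R M ⊆ minimalPrimes R)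
    (hfin : (associatedPrimes R M).Finite) :
    ∃ (l : ℕ) (f : Fin (l + 1) → Submodule R M),
      Monotone f ∧ f 0 = ⊥ ∧ f (Fin.last l) = ⊤ ∧
      l ≤ ∑ p ∈ hfin.toFinset, loewyLengthAt R p ∧
      ∀ i : Fin l, ∃ p ∈ minimalPrimes R,
        ∀ m ∈ f i.succ, ∀ a ∈ p, a • m ∈ f i.castSucc :=
  filtration_of_S1_general R M hS1 hfin
end
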